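/- In any many-to-one matching market, every stable matching is in the core (defined by weak domination), and the example market f1: {w1,w2} ≻ {w2} ≻ ∅, f2: {w1} ≻ {w2} ≻ ∅, w1: f1 ≻ f2, w2: f2 ≻ f1 shows the converse fails: its core is nonempty but it has no stable matching. -/
import Mathlib


open Finset
open scoped Classical

noncomputable section

variable {F W : Type} [Fintype F] [Fintype W] [DecidableEq F] [DecidableEq W]

/-- The set of workers assigned to firm `f` in matching `μ`. -/
def assigned (μ : W → Option F) (f : F) : Finset W :=
  Finset.univ.filter fun w => μ w = some f

/-- Worker `w`'s strict comparison of situations (a situation is a firm together with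
its full set of employees, or being unmatched), with the artificial externalities:
the worker is slightly better off when her employer is better off. -/
def wB (uF : F → Finset W → ℝ) (uW : W → Option F → ℝ) (w : W) :
    Option (F × Finset W) → Option (F × Finset W) → Prop
  | some p, some q =>
      uW w (some p.1) > uW w (some q.1) ∨ (p.1 = q.1 ∧ uF p.1 p.2 > uF q.1 q.2)
  | some p, none => uW w (some p.1) > uW w none
  | none, some q => uW w none > uW w (some q.1)
  | none, none => False

def wGe (uF : F → Finset W → ℝ) (uW : W → Option F → ℝ) (w : W)
    (p q : Option (F × Finset W)) : Prop :=
  wB uF uW w p q ∨ p = q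

/-- Total workload of worker `w` in the schedule `t`. -/
def workerLoad (t : F → Finset W → ℝ) (w : W) : ℝ :=
  ∑ f, ∑ S ∈ Finset.univ.filter (fun S => w ∈ S), t f S

/-- A (π-)schedule matching in the basic setting with indicator intensities and
capacities `capF`, `capW`. -/
def IsSched (uF : F → Finset W → ℝ) (capF : F → ℝ) (capW : W → ℝ)
    (t : F → Finset W → ℝ) : Prop :=
  (∀ f S, 0 ≤ t f S) ∧ (∀ f S, 0 < t f S → uF f S > uF f ∅) ∧
  (∀ f, ∑ S, t f S ≤ capF f) ∧ (∀ w, workerLoad t w ≤ capW w)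

/-- `S0` is firm `f`'s worst situation in the schedule matching `t`. -/
def WorstF (uF : F → Finset W → ℝ) (capF : F → ℝ) (t : F → Finset W → ℝ)
    (f : F) (S0 : Finset W) : Prop :=
  ((∑ S, t f S) = capF f ∧ 0 < t f S0 ∧ ∀ S, 0 < t f S → uF f S0 ≤ uF f S) ∨
  ((∑ S, t f S) ≠ capF f ∧ S0 = ∅)

/-- `p` is worker `w`'s worst situation in the schedule matching `t` (using `▷_w`). -/
def WorstW (uF : F → Finset W → ℝ) (uW : W → Option F → ℝ) (capW : W → ℝ)
    (t : F → Finset W → ℝ) (w : W) (p : Option (F × Finset W)) : Prop :=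
  (workerLoad t w = capW w ∧ ∃ f S, p = some (f, S) ∧ 0 < t f S ∧ w ∈ S ∧
    ∀ f' S', 0 < t f' S' → w ∈ S' → wGe uF uW w (some (f', S')) p) ∨
  (workerLoad t w ≠ capW w ∧ p = none)

/-- Worker `w`'s situation in the full-time matching `μ`. -/
def situ (μ : W → Option F) (w : W) : Option (F × Finset W) :=
  (μ w).map fun f => (f, assigned μ f)

/-- Matching `μ` dominates schedule matching `t`. -/
def Dominates (uF : F → Finset W → ℝ) (uW : W → Option F → ℝ)
    (capF : F → ℝ) (capW : W → ℝ) (t : F → Finset W → ℝ) (μ : W → Option F) : Prop :=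
  (∀ f S0, WorstF uF capF t f S0 → uF f (assigned μ f) ≥ uF f S0) ∧
  (∀ w p, WorstW uF uW capW t w p → wGe uF uW w (situ μ w) p)

/-- Individual rationality of a matching. -/
def IR (uF : F → Finset W → ℝ) (uW : W → Option F → ℝ) (μ : W → Option F) : Prop :=
  (∀ f, uF f (assigned μ f) ≥ uF f ∅) ∧ (∀ w, uW w (μ w) ≥ uW w none)

/-- Firm `f` together with the set of workers `S` blocks the matching `μ`. -/
def Blocks (uF : F → Finset W → ℝ) (uW : W → Option F → ℝ) (μ : W → Option F)
    (f : F) (S : Finset W) : Prop :=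
  uF f S > uF f (assigned μ f) ∧ ∀ w ∈ S, uW w (some f) ≥ uW w (μ w)

/-- Stability of a matching in the basic setting. -/
def StableM (uF : F → Finset W → ℝ) (uW : W → Option F → ℝ) (μ : W → Option F) : Prop :=
  IR uF uW μ ∧ ¬∃ f S, Blocks uF uW μ f S

/-- Firm preferences: f1 : {w1,w2} ≻ {w2} ≻ ∅ ; f2 : {w1} ≻ {w2} ≻ ∅
(unlisted nonempty sets are unacceptable). Firms are `0, 1`, workers are `0, 1`. -/
def uF1 : Fin 2 → Finset (Fin 2) → ℝ := fun f S =>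
  if f = 0 then (if S = {0, 1} then 2 else if S = {1} then 1 else if S = ∅ then 0 else -1)
  else (if S = {0} then 2 else if S = {1} then 1 else if S = ∅ then 0 else -1)

/-- Worker preferences: w1 : f1 ≻ f2 ; w2 : f2 ≻ f1 (both firms acceptable). -/
def uW1 : Fin 2 → Option (Fin 2) → ℝ := fun w o =>
  if w = 0 then (if o = some 0 then 2 else if o = some 1 then 1 else 0)
  else (if o = some 1 then 2 else if o = some 0 then 1 else 0)

/-- Coalition `{f} ∪ S` core-blocks `μ` (everyone strictly better off). -/
def CoreBlocks {F W : Type} [Fintype F] [Fintype W] [DecidableEq F] [DecidableEq W]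
    (uF : F → Finset W → ℝ) (uW : W → Option F → ℝ)
    (μ : W → Option F) (f : F) (S : Finset W) : Prop :=
  uF f S > uF f (assigned μ f) ∧ ∀ w ∈ S, uW w (some f) > uW w (μ w)

def InCore {F W : Type} [Fintype F] [Fintype W] [DecidableEq F] [DecidableEq W]
    (uF : F → Finset W → ℝ) (uW : W → Option F → ℝ) (μ : W → Option F) : Prop :=
  IR uF uW μ ∧ ¬∃ f S, CoreBlocks uF uW μ f S

/-- In any many-to-one matching market every stable matching is in the core
(by strict blocking); the converse fails: the displayed market has a matching in -/

lemma assigned_eq (μ : Fin 2 → Option (Fin 2)) (f : Fin 2) (a b : Option (Fin 2))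
    (h0 : μ 0 = a) (h1 : μ 1 = b) :
    assigned μ f = (if a = some f then {0} else ∅) ∪ (if b = some f then {1} else ∅) := by
  ext w
  fin_cases w <;> simp [assigned, h0, h1] <;> split_ifs <;> simp_all

lemma uF1_le_two (f : Fin 2) (S : Finset (Fin 2)) : uF1 f S ≤ 2 := by
  unfold uF1; split_ifs <;> norm_num

lemma uF1_zero_gt_one (S : Finset (Fin 2)) (h : uF1 0 S > 1) : S = {0, 1} := by
  by_contra hne
  have : uF1 0 S ≤ 1 := by
    unfold uF1; rw [if_pos rfl, if_neg hne]; split_ifs <;> norm_num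
  linarith

/-- main -/
theorem stmt18 :
    (∀ (F W : Type) [Fintype F] [Fintype W] [DecidableEq F] [DecidableEq W]
        (uF : F → Finset W → ℝ) (uW : W → Option F → ℝ) (μ : W → Option F),
        StableM uF uW μ → InCore uF uW μ) ∧
    InCore uF1 uW1 (fun w => if w = 0 then some 1 else some 0) ∧
    ¬∃ μ : Fin 2 → Option (Fin 2), StableM uF1 uW1 μ := by
  refine ⟨?_, ?_, ?_⟩
  · intro F W _ _ _ _ uF uW μ ⟨hIR, hnb⟩
    refine ⟨hIR, fun ⟨f, S, h1, h2⟩ => hnb ⟨f, S, h1, fun w hw => le_of_lt (h2 w hw)⟩⟩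
  · set μ : Fin 2 → Option (Fin 2) := fun w => if w = 0 then some 1 else some 0 with hμ
    have ha0 : assigned μ 0 = {1} := by
      rw [assigned_eq μ 0 (some 1) (some 0) rfl rfl]; decide
    have ha1 : assigned μ 1 = {0} := by
      rw [assigned_eq μ 1 (some 1) (some 0) rfl rfl]; decide
    constructor
    · constructor
      · intro f
        have : f = 0 ∨ f = 1 := by omega
        rcases this with rfl | rfl <;>
          simp [ha0, ha1] <;> norm_num [uF1, Finset.ext_iff, Fin.forall_fin_two]
      · intro w
        have : w = 0 ∨ w = 1 := by omega
        rcases this with rfl | rfl <;> simp [hμ, uW1]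
    · rintro ⟨f, S, h1, h2⟩
      have : f = 0 ∨ f = 1 := by omega
      rcases this with rfl | rfl
      · rw [ha0] at h1
        have h1' : uF1 0 S > 1 := by
          have : uF1 0 {1} = 1 := by norm_num [uF1, Finset.ext_iff, Fin.forall_fin_two]
          linarith
        have hS := uF1_zero_gt_one S h1'
        have := h2 1 (by rw [hS]; decide)
        norm_num [hμ, uW1] at this
      · rw [ha1] at h1
        have h2' : uF1 1 {0} = 2 := by norm_num [uF1, Finset.ext_iff, Fin.forall_fin_two]
        have := uF1_le_two 1 S
        linarith
  · rintro ⟨μ, ⟨hIRf, hIRw⟩, hnb⟩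
    have key : ∀ f S, uF1 f S > uF1 f (assigned μ f) →
        (∀ w ∈ S, uW1 w (some f) ≥ uW1 w (μ w)) → False := by
      intro f S h1 h2; exact hnb ⟨f, S, h1, h2⟩
    have hc0 : μ 0 = none ∨ μ 0 = some 0 ∨ μ 0 = some 1 := by
      rcases h : μ 0 with _ | f0
      · exact Or.inl rfl
      · have : f0 = 0 ∨ f0 = 1 := by omega
        rcases this with rfl | rfl
        · exact Or.inr (Or.inl rfl)
        · exact Or.inr (Or.inr rfl)
    have hc1 : μ 1 = none ∨ μ 1 = some 0 ∨ μ 1 = some 1 := by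
      rcases h : μ 1 with _ | f1
      · exact Or.inl rfl
      · have : f1 = 0 ∨ f1 = 1 := by omega
        rcases this with rfl | rfl
        · exact Or.inr (Or.inl rfl)
        · exact Or.inr (Or.inr rfl)
    rcases hc0 with h0 | h0 | h0 <;> rcases hc1 with h1 | h1 | h1
    · -- none, none : block (f2, {0})
      have ha : assigned μ 1 = ∅ := by
        rw [assigned_eq μ 1 none none h0 h1]; decide
      refine key 1 {0} (by rw [ha]; norm_num [uF1, Finset.ext_iff, Fin.forall_fin_two]) ?_
      intro w hw; simp at hw; subst hw; simp [h0, uW1]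
    · -- none, f1 : block (f2, {0})
      have ha : assigned μ 1 = ∅ := by
        rw [assigned_eq μ 1 none (some 0) h0 h1]; decide
      refine key 1 {0} (by rw [ha]; norm_num [uF1, Finset.ext_iff, Fin.forall_fin_two]) ?_
      intro w hw; simp at hw; subst hw; simp [h0, uW1]
    · -- none, f2 : block (f2, {0}) since uF1 1 {0} = 2 > 1 = uF1 1 {1}
      have ha : assigned μ 1 = {1} := by
        rw [assigned_eq μ 1 none (some 1) h0 h1]; decide
      refine key 1 {0} (by rw [ha]; norm_num [uF1, Finset.ext_iff, Fin.forall_fin_two]) ?_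
      intro w hw; simp at hw; subst hw; simp [h0, uW1]
    · -- f1, none : IR fails for f1 (assigned = {0})
      have ha : assigned μ 0 = {0} := by
        rw [assigned_eq μ 0 (some 0) none h0 h1]; decide
      have := hIRf 0; rw [ha] at this
      norm_num [uF1, Finset.ext_iff, Fin.forall_fin_two] at this
    · -- f1, f1 : block (f2, {1})
      have ha : assigned μ 1 = ∅ := by
        rw [assigned_eq μ 1 (some 0) (some 0) h0 h1]; decide
      refine key 1 {1} (by rw [ha]; norm_num [uF1, Finset.ext_iff, Fin.forall_fin_two]) ?_
      intro w hw; simp at hw; subst hw; simp [h1, uW1]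
    · -- f1, f2 : IR fails for f1 (assigned = {0})
      have ha : assigned μ 0 = {0} := by
        rw [assigned_eq μ 0 (some 0) (some 1) h0 h1]; decide
      have := hIRf 0; rw [ha] at this
      norm_num [uF1, Finset.ext_iff, Fin.forall_fin_two] at this
    · -- f2, none : block (f1, {1})
      have ha : assigned μ 0 = ∅ := by
        rw [assigned_eq μ 0 (some 1) none h0 h1]; decide
      refine key 0 {1} (by rw [ha]; norm_num [uF1, Finset.ext_iff, Fin.forall_fin_two]) ?_
      intro w hw; simp at hw; subst hw; simp [h1, uW1]
    · -- f2, f1 : block (f1, {0,1})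
      have ha : assigned μ 0 = {1} := by
        rw [assigned_eq μ 0 (some 1) (some 0) h0 h1]; decide
      refine key 0 {0, 1} (by rw [ha]; norm_num [uF1, Finset.ext_iff, Fin.forall_fin_two]) ?_
      intro w hw
      have : w = 0 ∨ w = 1 := by omega
      rcases this with rfl | rfl
      · simp [h0, uW1]
      · simp [h1, uW1]
    · -- f2, f2 : IR fails for f2 (assigned = {0,1})
      have ha : assigned μ 1 = {0, 1} := by
        rw [assigned_eq μ 1 (some 1) (some 1) h0 h1]; decide
      have := hIRf 1; rw [ha] at this
      norm_num [uF1, Finset.ext_iff, Fin.forall_fin_two] at this
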